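/- arXiv:0802.2654 — 2 statements merged into one kernel-verified Lean document; each statement's English description precedes it below -/
import Mathlib

section
/- For every n ≥ 0, the number of odd coefficients of (1+x+x^2+x^3)^n equals 2^s(3n), where s(m) denotes the number of 1s in the binary expansion of m. -/
/-!
Modulo 2 the polynomial factors as `1 + x + x² + x³ = (1 + x)³`, so `g₃(n)` counts the nonzero
coefficients of `(1 + x)^(3n)` over `𝔽₂`. Let `c(m) = #supp (1 + x)^m`. By Frobenius,
`(1 + x)^(2k)` is `(1 + x)^k` with `x` replaced by `x²`, hence `c(2k) = c(k)`; multiplying a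
polynomial in `x²` by `1 + x` doubles its support, so `c(2k+1) = 2 c(k)`. These are the
recursions of `2^s(m)`.
-/

open Polynomial

noncomputable def oddCoeffCount (p : Polynomial ℤ) : ℕ :=
  (p.support.filter fun j => Odd (p.coeff j)).card

noncomputable def g3 (n : ℕ) : ℕ := oddCoeffCount ((1 + X + X ^ 2 + X ^ 3) ^ n)

def s (m : ℕ) : ℕ := (Nat.digits 2 m).sum

theorem s_eq_mod_two_add_s_div_two (m : ℕ) : s m = m % 2 + s (m / 2) := by
  rcases m.eq_zero_or_pos with rfl | hm
  · rfl
  · simp [s, Nat.digits_def' one_lt_two hm]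

theorem s_two_mul (n : ℕ) : s (2 * n) = s n := by
  simp [s_eq_mod_two_add_s_div_two (2 * n)]

theorem s_two_mul_add_one (n : ℕ) : s (2 * n + 1) = s n + 1 := by
  rw [s_eq_mod_two_add_s_div_two, show (2 * n + 1) / 2 = n by omega,
    show (2 * n + 1) % 2 = 1 by omega, add_comm]

theorem oddCoeffCount_eq_card_support_map (p : ℤ[X]) :
    oddCoeffCount p = (p.map (Int.castRingHom (ZMod 2))).support.card := by
  unfold oddCoeffCount
  congr 1
  ext j
  simp only [Finset.mem_filter, mem_support_iff, coeff_map, Int.coe_castRingHom, ne_eq,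
    ZMod.intCast_eq_zero_iff_even, Int.not_even_iff_odd, and_iff_right_iff_imp]
  intro h h0
  exact Int.not_odd_zero (h0 ▸ h)

namespace Polynomial

variable {R : Type*} [CommSemiring R]

theorem support_expand {p : ℕ} (hp : 0 < p) (f : R[X]) :
    (expand R p f).support = f.support.map ⟨(· * p), mul_left_injective₀ hp.ne'⟩ := by
  ext n
  simp only [mem_support_iff, Finset.mem_map, Function.Embedding.coeFn_mk, coeff_expand hp]
  constructor
  · intro h
    split_ifs at h with hd
    · exact ⟨n / p, h, Nat.div_mul_cancel hd⟩
    · exact absurd rfl h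
  · rintro ⟨k, hk, rfl⟩
    simpa [hp.ne'] using hk

theorem card_support_expand {p : ℕ} (hp : 0 < p) (f : R[X]) :
    (expand R p f).support.card = f.support.card := by
  rw [support_expand hp, Finset.card_map]

theorem coeff_one_add_X_mul_expand_two (f : R[X]) (n : ℕ) :
    ((1 + X) * expand R 2 f).coeff n = f.coeff (n / 2) := by
  rw [add_mul, one_mul, coeff_add]
  rcases Nat.even_or_odd' n with ⟨k, rfl | rfl⟩
  · rcases k with _ | k
    · simp [coeff_expand two_pos]
    · rw [show 2 * (k + 1) = 2 * k + 1 + 1 by ring, coeff_X_mul]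
      simp [coeff_expand two_pos]
      omega
  · rw [coeff_X_mul]
    simp [coeff_expand two_pos, Nat.mul_add_div]

theorem card_support_one_add_X_mul_expand_two (f : R[X]) :
    ((1 + X) * expand R 2 f).support.card = 2 * f.support.card := by
  have hsupp : ((1 + X) * expand R 2 f).support =
      (f.support ×ˢ Finset.univ).map (Nat.divModEquiv 2).symm.toEmbedding := by
    ext n
    simp [Finset.mem_map_equiv, coeff_one_add_X_mul_expand_two]
  rw [hsupp, Finset.card_map, Finset.card_product, Finset.card_univ, Fintype.card_fin, mul_comm]

end Polynomial

theorem card_support_one_add_X_pow (m : ℕ) :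
    ((1 + X : (ZMod 2)[X]) ^ m).support.card = 2 ^ s m := by
  induction m using Nat.evenOddRec with
  | h0 => rw [pow_zero, ← C_1, support_C one_ne_zero]; rfl
  | h_even k ih =>
    rw [pow_mul', ← ZMod.expand_card, card_support_expand two_pos, ih, s_two_mul]
  | h_odd k ih =>
    rw [pow_succ', pow_mul', ← ZMod.expand_card, card_support_one_add_X_mul_expand_two, ih,
      s_two_mul_add_one, pow_succ, mul_comm]

theorem one_add_X_add_X_sq_add_X_cube_eq_one_add_X_pow_three :
    (1 + X + X ^ 2 + X ^ 3 : (ZMod 2)[X]) = (1 + X) ^ 3 := by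
  rw [pow_succ (1 + X), CharTwo.add_sq]
  ring

theorem stmt_7 : ∀ n : ℕ, g3 n = 2 ^ s (3 * n) := by
  intro n
  rw [g3, oddCoeffCount_eq_card_support_map, ← card_support_one_add_X_pow, pow_mul,
    ← one_add_X_add_X_sq_add_X_cube_eq_one_add_X_pow_three]
  simp
end

section
/- The summatory function of binary digit sums restricted to multiples of 3 satisfies ∑_{k=0}^{⌊n/3⌋} s(3k) ~ (1/(2 ln 2))·(n/3)·ln(n) as n → ∞, where s(m) is the number of 1s in the binary expansion of m. -/
/-!
Write `s (3 * k)` as the sum of the binary digits `3 * k / 2 ^ j % 2` for `j < L`, where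
`L = Nat.log 2 n + 1`, and swap the two sums. Since `3` is a unit modulo `2 ^ (j + 1)`,
multiplication by `3` permutes the residues, so the `j`-th digit of `3 * k` is `1` for exactly
half of each period of `2 ^ (j + 1)` consecutive values of `k`. Hence the `j`-th digit sum over
`k ≤ n / 3` is `(n / 3 + 1) / 2 + O(2 ^ j)`, and the whole sum is `L (n / 3 + 1) / 2 + O(n)`,
which is asymptotic to `(n / 3) log n / (2 log 2)`.
-/

open Filter Asymptotics Finset

theorem digits_sum_eq_sum_range {b L m : ℕ} (hb : 1 < b) (hm : m < b ^ L) :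
    (Nat.digits b m).sum = ∑ j ∈ range L, m / b ^ j % b := by
  induction L generalizing m with
  | zero => simp [Nat.lt_one_iff.mp (by simpa using hm)]
  | succ L ih =>
    rcases Nat.eq_zero_or_pos m with rfl | hm0
    · simp
    have hdiv : m / b < b ^ L := Nat.div_lt_of_lt_mul (by rwa [mul_comm, ← pow_succ])
    rw [Nat.digits_def' hb hm0, List.sum_cons, sum_range_succ', ih hdiv]
    simp [Nat.div_div_eq_div_mul, pow_succ', add_comm]

theorem sum_range_mul_of_periodic {M : Type*} [AddCommMonoid M] {f : ℕ → M} {p : ℕ}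
    (hf : Function.Periodic f p) (q : ℕ) :
    ∑ k ∈ range (q * p), f k = q • ∑ k ∈ range p, f k := by
  induction q with
  | zero => simp
  | succ q ih =>
    rw [add_mul, one_mul, sum_range_add, ih, succ_nsmul]
    congr 1
    exact sum_congr rfl fun k _ => by rw [add_comm]; exact hf.nat_mul q k

theorem abs_sum_range_sub_le_of_periodic {f : ℕ → ℝ} {p : ℕ} (hp : 0 < p)
    (hf : Function.Periodic f p) (hf0 : ∀ k, 0 ≤ f k) (N : ℕ) :
    |∑ k ∈ range N, f k - (N / p : ℝ) * ∑ k ∈ range p, f k| ≤ ∑ k ∈ range p, f k := by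
  set q := N / p
  set S := ∑ k ∈ range p, f k
  have hS : 0 ≤ S := sum_nonneg fun k _ => hf0 k
  have partial_sum_mono {m n : ℕ} (h : m ≤ n) : ∑ k ∈ range m, f k ≤ ∑ k ∈ range n, f k :=
    sum_le_sum_of_subset_of_nonneg (range_subset_range.mpr h) fun k _ _ => hf0 k
  have hNle : N ≤ (q + 1) * p := by rw [add_one_mul]; exact (Nat.lt_div_mul_add hp).le
  have hlow : q * S ≤ ∑ k ∈ range N, f k := by
    simpa [sum_range_mul_of_periodic hf] using partial_sum_mono (Nat.div_mul_le_self N p)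
  have hup : ∑ k ∈ range N, f k ≤ (q + 1) * S := by
    simpa [sum_range_mul_of_periodic hf] using partial_sum_mono hNle
  have hq : (q : ℝ) ≤ N / p := by
    rw [le_div_iff₀ (by positivity)]; exact_mod_cast Nat.div_mul_le_self N p
  have hq' : (N / p : ℝ) ≤ q + 1 := by
    rw [div_le_iff₀ (by positivity)]; exact_mod_cast hNle
  rw [abs_le]
  constructor <;> nlinarith

theorem sum_range_mul_mod_of_coprime {M : Type*} [AddCommMonoid M] {a d : ℕ}
    (had : a.Coprime d) (g : ℕ → M) :
    ∑ k ∈ range d, g (a * k % d) = ∑ k ∈ range d, g k := by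
  have hmaps : ∀ k ∈ range d, a * k % d ∈ range d := fun k hk =>
    mem_range.mpr (Nat.mod_lt _ (Nat.zero_lt_of_lt (mem_range.mp hk)))
  have hinj : Set.InjOn (fun k => a * k % d) (range d) := by
    intro k hk l hl h
    have hkl : k ≡ l [MOD d] := Nat.ModEq.cancel_left_of_coprime (Nat.coprime_comm.mp had) h
    rwa [Nat.ModEq, Nat.mod_eq_of_lt (mem_range.mp hk), Nat.mod_eq_of_lt (mem_range.mp hl)] at hkl
  have himage : (range d).image (fun k => a * k % d) = range d :=
    eq_of_subset_of_card_le (fun m hm => by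
      obtain ⟨k, hk, rfl⟩ := mem_image.mp hm; exact hmaps k hk)
      (card_image_of_injOn hinj).ge
  rw [← sum_image hinj, himage]

theorem sum_range_two_mul_div (d : ℕ) : ∑ m ∈ range (2 * d), m / d = d := by
  rw [two_mul, sum_range_add, sum_eq_zero fun m hm => Nat.div_eq_of_lt (mem_range.mp hm)]
  rcases Nat.eq_zero_or_pos d with rfl | hd
  · simp
  rw [sum_congr rfl fun m hm => by
    rw [add_comm, Nat.add_div_right _ hd, Nat.div_eq_of_lt (mem_range.mp hm)]]
  simp

theorem sum_range_two_pow_bit_mul_of_odd {a : ℕ} (ha : Odd a) (j : ℕ) :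
    ∑ k ∈ range (2 ^ (j + 1)), a * k / 2 ^ j % 2 = 2 ^ j := by
  have hcop : a.Coprime (2 ^ (j + 1)) := Nat.Coprime.pow_right _ ha.coprime_two_right
  simp_rw [← Nat.mod_mul_right_div_self, ← pow_succ]
  rw [sum_range_mul_mod_of_coprime hcop (· / 2 ^ j), pow_succ', sum_range_two_mul_div]

theorem abs_sum_bit_mul_sub_le_of_odd {a : ℕ} (ha : Odd a) (j N : ℕ) :
    |∑ k ∈ range N, ((a * k / 2 ^ j % 2 : ℕ) : ℝ) - N / 2| ≤ 2 ^ j := by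
  have hper : Function.Periodic (fun k => ((a * k / 2 ^ j % 2 : ℕ) : ℝ)) (2 ^ (j + 1)) := by
    intro k
    simp only [← Nat.mod_mul_right_div_self, ← pow_succ]
    rw [mul_add, Nat.add_mul_mod_self_right]
  have hsum : ∑ k ∈ range (2 ^ (j + 1)), ((a * k / 2 ^ j % 2 : ℕ) : ℝ) = 2 ^ j := by
    exact_mod_cast sum_range_two_pow_bit_mul_of_odd ha j
  have h := abs_sum_range_sub_le_of_periodic (by positivity) hper (fun _ => by positivity) N
  rw [hsum] at h
  convert h using 3
  push_cast
  rw [pow_succ]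
  field_simp

theorem abs_sum_s_mul_sub_le_of_odd {a : ℕ} (ha : Odd a) {L N : ℕ}
    (h : ∀ k < N, a * k < 2 ^ L) :
    |∑ k ∈ range N, (s (a * k) : ℝ) - L * N / 2| ≤ 2 ^ L := by
  have hbits : ∑ k ∈ range N, (s (a * k) : ℝ)
      = ∑ j ∈ range L, ∑ k ∈ range N, ((a * k / 2 ^ j % 2 : ℕ) : ℝ) := by
    rw [sum_comm]
    refine sum_congr rfl fun k hk => ?_
    rw [s, digits_sum_eq_sum_range one_lt_two (h k (mem_range.mp hk))]
    push_cast; rfl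
  have hmain : (L * N / 2 : ℝ) = ∑ j ∈ range L, (N / 2 : ℝ) := by
    rw [sum_const, card_range, nsmul_eq_mul]; ring
  calc |∑ k ∈ range N, (s (a * k) : ℝ) - L * N / 2|
      = |∑ j ∈ range L, (∑ k ∈ range N, ((a * k / 2 ^ j % 2 : ℕ) : ℝ) - N / 2)| := by
        rw [hbits, hmain, sum_sub_distrib]
    _ ≤ ∑ j ∈ range L, (2 : ℝ) ^ j :=
        (abs_sum_le_sum_abs _ _).trans (sum_le_sum fun j _ => abs_sum_bit_mul_sub_le_of_odd ha j N)
    _ ≤ 2 ^ L := by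
        rw [geom_sum_eq (by norm_num)]; norm_num

theorem isBigO_sum_s_three_mul_sub :
    (fun n : ℕ => ∑ k ∈ range (n / 3 + 1), (s (3 * k) : ℝ)
        - ((Nat.log 2 n + 1 : ℕ) : ℝ) * ((n / 3 + 1 : ℕ) : ℝ) / 2) =O[atTop] fun n => (n : ℝ) := by
  refine IsBigO.of_bound 2 ((eventually_ne_atTop 0).mono fun n hn => ?_)
  have hlt := Nat.lt_pow_succ_log_self one_lt_two n
  rw [Real.norm_eq_abs, Real.norm_natCast]
  refine (abs_sum_s_mul_sub_le_of_odd (by decide) fun k hk => by omega).trans ?_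
  rw [pow_succ, mul_comm]
  exact_mod_cast Nat.mul_le_mul_left 2 (Nat.pow_log_le_self 2 hn)

theorem isEquivalent_natFloor_add_one {α : Type*} {l : Filter α} {x : α → ℝ}
    (hx : Tendsto x l atTop) : (fun a => ((⌊x a⌋₊ + 1 : ℕ) : ℝ)) ~[l] x := by
  have hbound : (fun a => ((⌊x a⌋₊ + 1 : ℕ) : ℝ) - x a) =O[l] fun _ => (1 : ℝ) := by
    refine IsBigO.of_bound 1 ?_
    filter_upwards [hx.eventually_ge_atTop 0] with a ha
    have h1 := Nat.floor_le ha
    have h2 := Nat.lt_floor_add_one (x a)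
    rw [norm_one, mul_one, Real.norm_eq_abs, abs_le]
    push_cast
    constructor <;> linarith
  exact hbound.trans_isLittleO
    ((isLittleO_one_left_iff (F := ℝ)).mpr (tendsto_norm_atTop_atTop.comp hx))

theorem isEquivalent_natLog_add_one {b : ℕ} (hb : 1 < b) :
    (fun n : ℕ => ((Nat.log b n + 1 : ℕ) : ℝ)) ~[atTop] fun n => Real.logb b n := by
  simpa only [Function.comp_def, Real.natFloor_logb_natCast] using isEquivalent_natFloor_add_one
    ((Real.tendsto_logb_atTop (by exact_mod_cast hb : (1 : ℝ) < b)).comp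
      tendsto_natCast_atTop_atTop)

theorem isEquivalent_natDiv_add_one {d : ℕ} (hd : 0 < d) :
    (fun n : ℕ => ((n / d + 1 : ℕ) : ℝ)) ~[atTop] fun n => (n / d : ℝ) := by
  simpa only [Nat.floor_div_eq_div] using isEquivalent_natFloor_add_one
    (tendsto_natCast_atTop_atTop.atTop_div_const (by exact_mod_cast hd : (0 : ℝ) < d))

theorem isLittleO_natCast_mul_log :
    (fun n : ℕ => (n : ℝ)) =o[atTop] fun n : ℕ => (n : ℝ) * Real.log n := by
  have hlog : (fun _ : ℕ => (1 : ℝ)) =o[atTop] fun n : ℕ => Real.log n :=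
    (isLittleO_one_left_iff (F := ℝ)).mpr
      (tendsto_norm_atTop_atTop.comp (Real.tendsto_log_atTop.comp tendsto_natCast_atTop_atTop))
  simpa using (isBigO_refl (fun n : ℕ => (n : ℝ)) atTop).mul_isLittleO hlog

theorem stmt_18 :
    Filter.Tendsto
      (fun n : ℕ =>
        (∑ k ∈ Finset.range (n / 3 + 1), (s (3 * k) : ℝ)) /
          ((1 / (2 * Real.log 2)) * ((n : ℝ) / 3) * Real.log n))
      Filter.atTop (nhds 1) := by
  set D := fun n : ℕ => (1 / (2 * Real.log 2)) * ((n : ℝ) / 3) * Real.log n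
  have hlog2 := Real.log_pos one_lt_two
  have hD : ∀ᶠ n in atTop, D n ≠ 0 := by
    filter_upwards [eventually_ge_atTop 2] with n hn
    have hlog : 0 < Real.log n := Real.log_pos (by exact_mod_cast hn)
    positivity
  have hMD : (fun n : ℕ => ((Nat.log 2 n + 1 : ℕ) : ℝ) * ((n / 3 + 1 : ℕ) : ℝ) / 2) ~[atTop] D :=
    (((isEquivalent_natLog_add_one one_lt_two).mul (isEquivalent_natDiv_add_one three_pos)).div
      IsEquivalent.refl).congr_right (EventuallyEq.of_eq (funext fun n => by
        simp only [D, Pi.mul_apply, Pi.div_apply, Real.logb]; push_cast; ring))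
  have hnD : (fun n : ℕ => (n : ℝ)) =o[atTop] D :=
    isLittleO_natCast_mul_log.trans_isBigO
      ((isBigO_const_mul_self (6 * Real.log 2) D atTop).congr_left fun n => by
        simp only [D]; field_simp; ring)
  exact (isEquivalent_iff_tendsto_one hD).mp
    ((hMD.add_isLittleO (isBigO_sum_s_three_mul_sub.trans_isLittleO hnD)).congr_left
      (EventuallyEq.of_eq (funext fun n => add_sub_cancel _ _)))
end
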